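/- The function R_1(t) = \frac{\sqrt{(4t-15)e^{4t} + (24t+32)e^{3t} - (8t^3+12t^2+36t+18)e^{2t} + 8te^t + 1}}{2t(-1 - 3e^{2t} + 4e^t + 2te^{2t})} satisfies R_1(t) = \frac{1}{2t^{3/2}} + O(t^{-2}) as t \to \infty. -/
import Mathlib

open Filter Asymptotics

noncomputable def R1 (t : ℝ) : ℝ :=
  Real.sqrt ((4 * t - 15) * Real.exp (4 * t) + (24 * t + 32) * Real.exp (3 * t)
      - (8 * t ^ 3 + 12 * t ^ 2 + 36 * t + 18) * Real.exp (2 * t)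
      + 8 * t * Real.exp t + 1) /
    (2 * t * (-1 - 3 * Real.exp (2 * t) + 4 * Real.exp t + 2 * t * Real.exp (2 * t)))

set_option maxHeartbeats 1000000 in
lemma key (t : ℝ) (ht : 40 ≤ t) :
    |R1 t - 1 / (2 * t ^ ((3 : ℝ) / 2))| ≤ 3 * t ^ (-(2 : ℝ)) := by
  have ht0 : (0:ℝ) < t := by linarith
  obtain ⟨E, hE⟩ : ∃ E : ℝ, E = Real.exp t := ⟨_, rfl⟩
  have hE0 : (0:ℝ) < E := hE ▸ Real.exp_pos t
  obtain ⟨v, hvdef⟩ : ∃ v : ℝ, v = E⁻¹ := ⟨_, rfl⟩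
  have hv0 : (0:ℝ) < v := hvdef ▸ inv_pos.mpr hE0
  have hE5 : (t/5)^5 ≤ E := by
    have h1 : t/5 + 1 ≤ Real.exp (t/5) := Real.add_one_le_exp _
    have h2 : (t/5)^5 ≤ (Real.exp (t/5))^5 := by
      apply pow_le_pow_left₀ (by positivity) (by linarith)
    calc (t/5)^5 ≤ (Real.exp (t/5))^5 := h2
    _ = Real.exp ((5:ℕ) * (t/5)) := by rw [Real.exp_nat_mul]
    _ = E := by rw [hE]; congr 1; push_cast; ring
  have hvE : v * E = 1 := by rw [hvdef]; exact inv_mul_cancel₀ hE0.ne'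
  have hv : v * t^5 ≤ 3125 := by
    have h := mul_le_mul_of_nonneg_left hE5 hv0.le
    rw [hvE] at h
    calc v * t^5 = 3125 * (v * (t/5)^5) := by ring
    _ ≤ 3125 * 1 := by linarith
    _ = 3125 := by norm_num
  have ht5 : (40:ℝ)^5 ≤ t^5 := pow_le_pow_left₀ (by norm_num) ht 5
  have ht4 : (40:ℝ)^4 ≤ t^4 := pow_le_pow_left₀ (by norm_num) ht 4
  have ht3 : (40:ℝ)^3 ≤ t^3 := pow_le_pow_left₀ (by norm_num) ht 3
  have ht2 : (40:ℝ)^2 ≤ t^2 := pow_le_pow_left₀ (by norm_num) ht 2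
  have hv960 : 960 * v ≤ 1 := by
    have h : (960 * v) * t^5 ≤ 1 * t^5 := by
      calc (960 * v) * t^5 = 960 * (v * t^5) := by ring
      _ ≤ 960 * 3125 := by linarith
      _ = 3000000 := by norm_num
      _ ≤ 1 * t^5 := by rw [one_mul]; calc (3000000:ℝ) ≤ 40^5 := by norm_num
                          _ ≤ t^5 := ht5
    exact le_of_mul_le_mul_right h (pow_pos ht0 5)
  have hv1 : v ≤ 1 := by linarith
  have htv : t * v ≤ 1 := by
    have h : (t * v) * t^4 ≤ 1 * t^4 := by
      calc (t * v) * t^4 = v * t^5 := by ring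
      _ ≤ 3125 := hv
      _ ≤ 1 * t^4 := by rw [one_mul]; calc (3125:ℝ) ≤ 40^4 := by norm_num
                          _ ≤ t^4 := ht4
    exact le_of_mul_le_mul_right h (pow_pos ht0 4)
  have ht2v : t^2 * v ≤ 1 := by
    have h : (t^2 * v) * t^3 ≤ 1 * t^3 := by
      calc (t^2 * v) * t^3 = v * t^5 := by ring
      _ ≤ 3125 := hv
      _ ≤ 1 * t^3 := by rw [one_mul]; calc (3125:ℝ) ≤ 40^3 := by norm_num
                          _ ≤ t^3 := ht3
    exact le_of_mul_le_mul_right h (pow_pos ht0 3)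
  have ht3v : t^3 * v ≤ 4 := by
    have h : (t^3 * v) * t^2 ≤ 4 * t^2 := by
      calc (t^3 * v) * t^2 = v * t^5 := by ring
      _ ≤ 3125 := hv
      _ ≤ 4 * t^2 := by calc (3125:ℝ) ≤ 4 * 40^2 := by norm_num
                          _ ≤ 4 * t^2 := by linarith
    exact le_of_mul_le_mul_right h (pow_pos ht0 2)
  have ht4v : t^4 * v ≤ 105 := by
    have h : (t^4 * v) * t ≤ 105 * t := by
      calc (t^4 * v) * t = v * t^5 := by ring
      _ ≤ 3125 := hv
      _ ≤ 105 * t := by linarith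
    exact le_of_mul_le_mul_right h ht0
  -- monomial helper bounds
  have ht3v2 : t^3 * v^2 ≤ 4*v := by
    have := mul_le_mul_of_nonneg_right ht3v hv0.le; linarith [this]
  have ht4v2 : t^4 * v^2 ≤ 105*v := by
    have := mul_le_mul_of_nonneg_right ht4v hv0.le; linarith [this]
  have ht2v2 : t^2 * v^2 ≤ v := by
    have := mul_le_mul_of_nonneg_right ht2v hv0.le; linarith [this]
  have htv2 : t * v^2 ≤ v := by
    have := mul_le_mul_of_nonneg_right htv hv0.le; linarith [this]
  have hvv : v^2 ≤ v := by
    have := mul_le_mul_of_nonneg_right hv1 hv0.le; linarith [this]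
  have ht2v3 : t^2 * v^3 ≤ v := by
    have := mul_le_mul_of_nonneg_right ht2v2 hv0.le; linarith [this, hvv]
  have hv3 : v^3 ≤ v := by
    have := mul_le_mul_of_nonneg_right hvv hv0.le; linarith [this, hvv]
  have htv4 : t * v^4 ≤ v := by
    have h1 := mul_le_mul_of_nonneg_right htv2 (mul_nonneg hv0.le hv0.le)
    have h2 := mul_le_mul_of_nonneg_right hvv hv0.le
    linarith [h1, h2, hv3]
  have hv4 : v^4 ≤ v := by
    have := mul_le_mul_of_nonneg_right hv3 hv0.le; linarith [this, hvv]
  -- nonnegativity of monomials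
  have n0 : (0:ℝ) ≤ v := hv0.le
  have n1 : (0:ℝ) ≤ v^2 := sq_nonneg v
  have n2 : (0:ℝ) ≤ v^3 := pow_nonneg hv0.le 3
  have n3 : (0:ℝ) ≤ v^4 := pow_nonneg hv0.le 4
  have n4 : (0:ℝ) ≤ t*v := mul_nonneg ht0.le n0
  have n5 : (0:ℝ) ≤ t^2*v := mul_nonneg (pow_nonneg ht0.le 2) n0
  have n6 : (0:ℝ) ≤ t*v^2 := mul_nonneg ht0.le n1
  have n7 : (0:ℝ) ≤ t^2*v^2 := mul_nonneg (pow_nonneg ht0.le 2) n1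
  have n8 : (0:ℝ) ≤ t^3*v^2 := mul_nonneg (pow_nonneg ht0.le 3) n1
  have n9 : (0:ℝ) ≤ t^4*v^2 := mul_nonneg (pow_nonneg ht0.le 4) n1
  have n10 : (0:ℝ) ≤ t^2*v^3 := mul_nonneg (pow_nonneg ht0.le 2) n2
  have n11 : (0:ℝ) ≤ t*v^4 := mul_nonneg ht0.le n3
  have n12 : (0:ℝ) ≤ t*v^3 := mul_nonneg ht0.le n2
  obtain ⟨M, hMeq⟩ : ∃ M : ℝ, M = 4*t - 15 + (24*t+32)*v
      - (8*t^3+12*t^2+36*t+18)*v^2 + 8*t*v^3 + v^4 := ⟨_, rfl⟩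
  obtain ⟨b, hbeq⟩ : ∃ b : ℝ, b = 2*t - 3 + 4*v - v^2 := ⟨_, rfl⟩
  have hM2t : 2*t ≤ M := by
    rw [hMeq]; linarith [ht3v2, ht2v2, htv2, hvv, hv960, n12, n3, n4, n0]
  have hbt : t ≤ b := by rw [hbeq]; linarith [hvv, hv960, n0]
  have hb0 : (0:ℝ) < b := lt_of_lt_of_le ht0 hbt
  have hQ : t*M - b^2 = -3*t - 9 + (24*t^2+16*t+24)*v
      + (-(8*t^4)-12*t^3-36*t^2-14*t-22)*v^2 + (8*t^2+8)*v^3 + (t-1)*v^4 := by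
    rw [hMeq, hbeq]; ring
  have hQub : t*M - b^2 ≤ 6*t := by
    rw [hQ]
    linarith [ht2v, htv, hv960, ht2v3, hv3, htv4, n9, n8, n7, n6, n1, n3, ht0]
  have hQlb : -(6*t) ≤ t*M - b^2 := by
    rw [hQ]
    linarith [ht4v2, ht3v2, ht2v2, htv2, hvv, hv960, n5, n4, n0, n10, n2, n11, n3, ht0, ht]
  have hM0 : (0:ℝ) ≤ M := by linarith
  have htM : (0:ℝ) ≤ t*M := mul_nonneg ht0.le hM0
  -- rewrite R1
  have h4e : Real.exp (4*t) = E^4 := by rw [hE, ← Real.exp_nat_mul]; norm_num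
  have h3e : Real.exp (3*t) = E^3 := by rw [hE, ← Real.exp_nat_mul]; norm_num
  have h2e : Real.exp (2*t) = E^2 := by rw [hE, ← Real.exp_nat_mul]; norm_num
  have hN : (4 * t - 15) * Real.exp (4 * t) + (24 * t + 32) * Real.exp (3 * t)
      - (8 * t ^ 3 + 12 * t ^ 2 + 36 * t + 18) * Real.exp (2 * t)
      + 8 * t * Real.exp t + 1 = E^4 * M := by
    rw [h4e, h3e, h2e, ← hE, hMeq, hvdef]
    field_simp
  have hDen : 2 * t * (-1 - 3 * Real.exp (2 * t) + 4 * Real.exp t + 2 * t * Real.exp (2 * t))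
      = 2 * t * (E^2 * b) := by
    rw [h2e, ← hE, hbeq, hvdef]
    field_simp
    ring
  have hR1 : R1 t = Real.sqrt M / (2 * t * b) := by
    rw [R1, hN, hDen]
    rw [show E^4 * M = (E^2)^2 * M by ring, Real.sqrt_mul (by positivity), Real.sqrt_sq (by positivity)]
    rw [mul_comm (2*t) (E^2*b), mul_assoc, mul_div_mul_left _ _ (by positivity : (E:ℝ)^2 ≠ 0), mul_comm b (2*t)]
  obtain ⟨r, hreq⟩ : ∃ r : ℝ, r = Real.sqrt t := ⟨_, rfl⟩
  have hr0 : (0:ℝ) < r := hreq ▸ Real.sqrt_pos.mpr ht0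
  have hr2 : r^2 = t := hreq ▸ Real.sq_sqrt ht0.le
  have hr1 : (1:ℝ) ≤ r := by
    have h := Real.sqrt_le_sqrt (show (1:ℝ) ≤ t by linarith)
    rw [Real.sqrt_one] at h
    rw [hreq]; exact h
  obtain ⟨s, hseq⟩ : ∃ s : ℝ, s = Real.sqrt (t*M) := ⟨_, rfl⟩
  have hs0 : (0:ℝ) ≤ s := hseq ▸ Real.sqrt_nonneg _
  have hs2 : s^2 = t*M := hseq ▸ Real.sq_sqrt htM
  have hsM : Real.sqrt M = s / r := by
    rw [hseq, Real.sqrt_mul ht0.le, ← hreq, mul_comm, mul_div_assoc, div_self hr0.ne', mul_one]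
  have ht32 : t ^ ((3:ℝ)/2) = t * r := by
    rw [show (3:ℝ)/2 = 1 + 1/2 by norm_num, Real.rpow_add ht0, Real.rpow_one,
      ← Real.sqrt_eq_rpow, hreq]
  have htm2 : t ^ (-(2:ℝ)) = 1 / t^2 := by
    rw [Real.rpow_neg ht0.le, show (2:ℝ) = ((2:ℕ):ℝ) by norm_num, Real.rpow_natCast, one_div]
  have hsb0 : (0:ℝ) < s + b := by linarith
  have hfrac : s - b = (t*M - b^2)/(s+b) := by
    rw [eq_div_iff hsb0.ne']
    linear_combination hs2
  have hmain : R1 t - 1 / (2 * t ^ ((3:ℝ)/2)) = (s - b)/(2*t*r*b) := by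
    rw [hR1, ht32, hsM]
    field_simp
  have hdenpos : (0:ℝ) < (s+b)*(2*t*r*b) :=
    mul_pos hsb0 (mul_pos (mul_pos (mul_pos two_pos ht0) hr0) hb0)
  have habs : |t*M - b^2| ≤ 6*t := abs_le.mpr ⟨hQlb, hQub⟩
  have hden : 2*t^3 ≤ (s+b)*(2*t*r*b) := by
    have h1 : t ≤ s + b := by linarith
    have h2 : 2*t^2 ≤ 2*t*r*b := by
      have ha : b ≤ r*b := le_mul_of_one_le_left hb0.le hr1
      have hb' : t ≤ r*b := le_trans hbt ha
      calc 2*t^2 = (2*t)*t := by ring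
      _ ≤ (2*t)*(r*b) := mul_le_mul_of_nonneg_left hb' (by linarith)
      _ = 2*t*r*b := by ring
    calc 2*t^3 = t * (2*t^2) := by ring
    _ ≤ (s+b)*(2*t*r*b) := mul_le_mul h1 h2 (by positivity) (by linarith)
  calc |R1 t - 1 / (2 * t ^ ((3:ℝ)/2))|
      = |t*M - b^2| / ((s+b)*(2*t*r*b)) := by
        rw [hmain, hfrac, div_div, abs_div, abs_of_pos hdenpos]
    _ ≤ (6*t) / (2*t^3) := div_le_div₀ (by linarith) habs (by positivity) hden
    _ = 3 * (1/t^2) := by field_simp; ring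
    _ = 3 * t ^ (-(2:ℝ)) := by rw [htm2]

theorem stmt11 :
    (fun t : ℝ => R1 t - 1 / (2 * t ^ ((3 : ℝ) / 2)))
      =O[atTop] fun t : ℝ => t ^ (-(2 : ℝ)) := by
  rw [isBigO_iff]
  refine ⟨3, ?_⟩
  filter_upwards [eventually_ge_atTop 40] with t ht
  have h := key t ht
  have h2 : (0:ℝ) ≤ t ^ (-(2:ℝ)) := Real.rpow_nonneg (by linarith) _
  rw [Real.norm_eq_abs, Real.norm_eq_abs, abs_of_nonneg h2]
  exact h
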